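/- arXiv:1510.04747 — 3 statements merged into one kernel-verified Lean document; each statement's English description precedes it below -/
import Mathlib

section
/- Let $\tilde\psi_1, \dots, \tilde\psi_B \in \mathbb{R}^n$ be unit vectors with $|\langle \tilde\psi_i, \tilde\psi_j \rangle| \le \eta$ for $i \neq j$, with $0 < \eta \le 1$ and $B \le \eta^{-3/2}$. Then for any unit vector $u$, $\sum_{i=1}^B |\tilde\psi_i^\top u|^3 \le C$ for an absolute constant $C$ (e.g., $C = 12$). -/
open scoped BigOperators RealInnerProductSpace

lemma stmt4_key (n B : ℕ) (η : ℝ) (hη0 : 0 ≤ η)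
    (ψ : Fin B → EuclideanSpace ℝ (Fin n))
    (hunit : ∀ i, ‖ψ i‖ = 1)
    (hinc : ∀ i j, i ≠ j → |⟪ψ i, ψ j⟫| ≤ η)
    (u : EuclideanSpace ℝ (Fin n)) (hu : ‖u‖ = 1)
    (T : Finset (Fin B)) :
    ∑ i ∈ T, ⟪ψ i, u⟫ ^ 2 ≤ 1 + η * T.card := by
  set c : Fin B → ℝ := fun i => ⟪ψ i, u⟫ with hc
  set Q := ∑ i ∈ T, c i ^ 2 with hQdef
  have hQ0 : 0 ≤ Q := Finset.sum_nonneg (fun i _ => sq_nonneg _)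
  rcases eq_or_lt_of_le hQ0 with h | hQpos
  · rw [← h]; positivity
  set v := ∑ i ∈ T, c i • ψ i with hv
  have hQv : Q = ⟪v, u⟫ := by
    rw [hv, sum_inner]
    refine Finset.sum_congr rfl (fun i _ => ?_)
    rw [real_inner_smul_left, sq]
  have hCS : Q ≤ ‖v‖ := by
    rw [hQv]
    calc ⟪v, u⟫ ≤ ‖v‖ * ‖u‖ := real_inner_le_norm _ _
      _ = ‖v‖ := by rw [hu, mul_one]
  have hv2 : ‖v‖ ^ 2 = ∑ i ∈ T, ∑ j ∈ T, c i * c j * ⟪ψ i, ψ j⟫ := by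
    rw [← real_inner_self_eq_norm_sq, hv, sum_inner]
    refine Finset.sum_congr rfl (fun i _ => ?_)
    rw [real_inner_smul_left, inner_sum, Finset.mul_sum]
    refine Finset.sum_congr rfl (fun j _ => ?_)
    rw [real_inner_smul_right]; ring
  have hterm : ∀ i ∈ T, ∀ j ∈ T, c i * c j * ⟪ψ i, ψ j⟫ ≤
      (if i = j then c i ^ 2 else 0) + η * (|c i| * |c j|) := by
    intro i _ j _
    by_cases hij : i = j
    · subst hij
      have h1 : ⟪ψ i, ψ i⟫ = 1 := by
        rw [real_inner_self_eq_norm_sq, hunit i]; norm_num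
      rw [h1, if_pos rfl]
      nlinarith [sq_nonneg (c i), mul_nonneg (mul_nonneg hη0 (abs_nonneg (c i))) (abs_nonneg (c i))]
    · simp only [if_neg hij, zero_add]
      calc c i * c j * ⟪ψ i, ψ j⟫ ≤ |c i * c j * ⟪ψ i, ψ j⟫| := le_abs_self _
        _ = |c i| * |c j| * |⟪ψ i, ψ j⟫| := by rw [abs_mul, abs_mul]
        _ ≤ |c i| * |c j| * η := by
            exact mul_le_mul_of_nonneg_left (hinc i j hij)
              (mul_nonneg (abs_nonneg _) (abs_nonneg _))
        _ = η * (|c i| * |c j|) := by ring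
  have hsum : ‖v‖ ^ 2 ≤ Q + η * (T.card * Q) := by
    rw [hv2]
    calc ∑ i ∈ T, ∑ j ∈ T, c i * c j * ⟪ψ i, ψ j⟫
        ≤ ∑ i ∈ T, ∑ j ∈ T, ((if i = j then c i ^ 2 else 0) + η * (|c i| * |c j|)) := by
          refine Finset.sum_le_sum (fun i hi => Finset.sum_le_sum (fun j hj => hterm i hi j hj))
      _ = Q + η * (∑ i ∈ T, |c i|) ^ 2 := by
          simp only [Finset.sum_add_distrib]
          congr 1
          · rw [hQdef]
            refine Finset.sum_congr rfl (fun i hi => ?_)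
            rw [Finset.sum_ite_eq T i (fun _ => c i ^ 2), if_pos hi]
          · rw [sq, Finset.sum_mul_sum, Finset.mul_sum]
            refine Finset.sum_congr rfl (fun i _ => ?_)
            rw [Finset.mul_sum]
      _ ≤ Q + η * (T.card * Q) := by
          have h1 : (∑ i ∈ T, |c i|) ^ 2 ≤ T.card * ∑ i ∈ T, |c i| ^ 2 :=
            sq_sum_le_card_mul_sum_sq
          have h2 : ∑ i ∈ T, |c i| ^ 2 = Q := by
            refine Finset.sum_congr rfl (fun i _ => sq_abs _)
          rw [h2] at h1
          nlinarith
  have hQ2 : Q ^ 2 ≤ Q + η * (T.card * Q) := by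
    calc Q ^ 2 ≤ ‖v‖ ^ 2 := by nlinarith [norm_nonneg v]
      _ ≤ _ := hsum
  have : Q ≤ 1 + η * T.card := by nlinarith
  exact this

/-- ℓ³ bound for correlations with incoherent unit vectors. -/
theorem stmt_4 (n B : ℕ) (η : ℝ) (hη0 : 0 < η) (hη1 : η ≤ 1)
    (hB : (B : ℝ) ≤ η ^ (-(3 : ℝ) / 2))
    (ψ : Fin B → EuclideanSpace ℝ (Fin n))
    (hunit : ∀ i, ‖ψ i‖ = 1)
    (hinc : ∀ i j, i ≠ j → |⟪ψ i, ψ j⟫| ≤ η)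
    (u : EuclideanSpace ℝ (Fin n)) (hu : ‖u‖ = 1) :
    ∑ i, |⟪ψ i, u⟫| ^ 3 ≤ 12 := by
  set a : Fin B → ℝ := fun i => |⟪ψ i, u⟫| with ha
  have ha0 : ∀ i, 0 ≤ a i := fun i => abs_nonneg _
  have ha1 : ∀ i, a i ≤ 1 := by
    intro i
    calc a i ≤ ‖ψ i‖ * ‖u‖ := abs_real_inner_le_norm _ _
      _ = 1 := by rw [hunit i, hu, mul_one]
  have key : ∀ T : Finset (Fin B), ∑ i ∈ T, a i ^ 2 ≤ 1 + η * T.card := by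
    intro T
    have := stmt4_key n B η hη0.le ψ hunit hinc u hu T
    calc ∑ i ∈ T, a i ^ 2 = ∑ i ∈ T, ⟪ψ i, u⟫ ^ 2 :=
          Finset.sum_congr rfl (fun i _ => sq_abs _)
      _ ≤ _ := this
  set t := Real.sqrt (2 * η) with ht
  have ht0 : 0 ≤ t := Real.sqrt_nonneg _
  have ht2 : t ^ 2 = 2 * η := Real.sq_sqrt (by linarith)
  set S := Finset.univ.filter (fun i => t ≤ a i) with hS
  -- card bound: η * S.card ≤ 1
  have hcard : η * S.card ≤ 1 := by
    have h1 : (2 * η) * S.card ≤ ∑ i ∈ S, a i ^ 2 := by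
      calc (2 * η) * S.card = ∑ _i ∈ S, (2 * η) := by
            rw [Finset.sum_const, nsmul_eq_mul]; ring
        _ ≤ ∑ i ∈ S, a i ^ 2 := by
            refine Finset.sum_le_sum (fun i hi => ?_)
            have : t ≤ a i := (Finset.mem_filter.mp hi).2
            nlinarith [ha0 i]
    have h2 := key S
    linarith
  have hSsum : ∑ i ∈ S, a i ^ 3 ≤ 2 := by
    calc ∑ i ∈ S, a i ^ 3 ≤ ∑ i ∈ S, a i ^ 2 := by
          refine Finset.sum_le_sum (fun i _ => ?_)
          nlinarith [ha0 i, ha1 i]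
      _ ≤ 1 + η * S.card := key S
      _ ≤ 2 := by linarith
  -- full ℓ² bound
  set s := Real.sqrt η with hsdef
  have hs0 : 0 < s := Real.sqrt_pos.mpr hη0
  have hs2 : s ^ 2 = η := Real.sq_sqrt hη0.le
  have hs1 : s ≤ 1 := Real.sqrt_le_one.mpr hη1
  have hηB : η * B ≤ s⁻¹ := by
    have h1 : η * (B : ℝ) ≤ η * η ^ (-(3 : ℝ) / 2) :=
      mul_le_mul_of_nonneg_left hB hη0.le
    have h2 : η * η ^ (-(3 : ℝ) / 2) = η ^ (-(1 : ℝ) / 2) := by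
      nth_rewrite 1 [← Real.rpow_one η]
      rw [← Real.rpow_add hη0]
      norm_num
    have h3 : η ^ (-(1 : ℝ) / 2) = s⁻¹ := by
      rw [hsdef, Real.sqrt_eq_rpow, ← Real.rpow_neg hη0.le]
      norm_num
    calc η * B ≤ η * η ^ (-(3 : ℝ) / 2) := h1
      _ = η ^ (-(1 : ℝ) / 2) := h2
      _ = s⁻¹ := h3
  have hts : t = Real.sqrt 2 * s := by
    rw [ht, hsdef, Real.sqrt_mul (by norm_num : (0:ℝ) ≤ 2)]
  have hfull : ∑ i, a i ^ 2 ≤ 1 + η * B := by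
    have := key Finset.univ
    simpa using this
  have hoffsum : ∑ i ∈ Finset.univ.filter (fun i => ¬ t ≤ a i), a i ^ 3
      ≤ t * ∑ i, a i ^ 2 := by
    calc ∑ i ∈ Finset.univ.filter (fun i => ¬ t ≤ a i), a i ^ 3
        ≤ ∑ i ∈ Finset.univ.filter (fun i => ¬ t ≤ a i), t * a i ^ 2 := by
          refine Finset.sum_le_sum (fun i hi => ?_)
          have h : a i ≤ t := le_of_not_ge (Finset.mem_filter.mp hi).2
          nlinarith [ha0 i]
      _ = t * ∑ i ∈ Finset.univ.filter (fun i => ¬ t ≤ a i), a i ^ 2 := by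
          rw [Finset.mul_sum]
      _ ≤ t * ∑ i, a i ^ 2 := by
          refine mul_le_mul_of_nonneg_left ?_ ht0
          refine Finset.sum_le_sum_of_subset_of_nonneg (Finset.filter_subset _ _)
            (fun i _ _ => sq_nonneg _)
  have hsqrt2 : Real.sqrt 2 ≤ 2 := by
    nlinarith [Real.sq_sqrt (by norm_num : (0:ℝ) ≤ 2), Real.sqrt_nonneg 2]
  have hsplit : ∑ i, a i ^ 3 = (∑ i ∈ S, a i ^ 3)
      + ∑ i ∈ Finset.univ.filter (fun i => ¬ t ≤ a i), a i ^ 3 := by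
    rw [hS]
    exact (Finset.sum_filter_add_sum_filter_not Finset.univ _ _).symm
  have hfinal : t * ∑ i, a i ^ 2 ≤ 2 * Real.sqrt 2 := by
    calc t * ∑ i, a i ^ 2 ≤ t * (1 + η * B) := by
          refine mul_le_mul_of_nonneg_left hfull ht0
      _ ≤ t * (1 + s⁻¹) := by
          refine mul_le_mul_of_nonneg_left (by linarith) ht0
      _ = Real.sqrt 2 * s + Real.sqrt 2 := by
          rw [hts]
          field_simp
      _ ≤ 2 * Real.sqrt 2 := by nlinarith [Real.sqrt_nonneg 2]
  calc ∑ i, a i ^ 3 ≤ 2 + 2 * Real.sqrt 2 := by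
        rw [hsplit]; linarith
    _ ≤ 12 := by linarith
end

section
/- Let $\Psi = \sum_{i=1}^B \psi_i \otimes \psi_i \otimes \psi_i$ where each $\psi_i \in \{0,1\}^n$ has exactly $d$ nonzero entries, and suppose $\langle \psi_i, \psi_j \rangle \le \eta d$ for all $i \neq j$ with $B \le \eta^{-3/2}$ and $0 < \eta \le 1$. Then the tensor spectral norm satisfies $\|\Psi\| \le C\, d^{3/2}$ for an absolute constant $C$. -/
open scoped BigOperators

/-- Tensor spectral norm (symmetric variational form). -/
noncomputable def tensorSpecNorm (n : ℕ) (T : Fin n → Fin n → Fin n → ℝ) : ℝ :=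
  ⨆ u : {u : EuclideanSpace ℝ (Fin n) // ‖u‖ = 1},
    |∑ i, ∑ j, ∑ k, T i j k * u.1 i * u.1 j * u.1 k|

lemma aux_triple (n B : ℕ) (ψ : Fin B → Fin n → ℝ) (u : Fin n → ℝ) :
    ∑ a, ∑ b, ∑ c, (∑ i, ψ i a * ψ i b * ψ i c) * u a * u b * u c
    = ∑ i, (∑ a, ψ i a * u a) ^ 3 := by
  have h : ∀ i : Fin B, (∑ a, ψ i a * u a) ^ 3
      = ∑ a, ∑ b, ∑ c, ψ i a * ψ i b * ψ i c * u a * u b * u c := by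
    intro i
    rw [pow_succ, pow_two, Finset.sum_mul_sum, Finset.sum_mul]
    refine Finset.sum_congr rfl fun a _ => ?_
    rw [Finset.sum_mul]
    refine Finset.sum_congr rfl fun b _ => ?_
    rw [Finset.mul_sum]
    refine Finset.sum_congr rfl fun c _ => ?_
    ring
  simp_rw [h]
  simp_rw [Finset.sum_mul]
  have e : ∀ (g : Fin n → Fin B → ℝ), (∑ c, ∑ i, g c i) = ∑ i, ∑ c, g c i :=
    fun g => Finset.sum_comm
  calc ∑ a, ∑ b, ∑ c, ∑ i, ψ i a * ψ i b * ψ i c * u a * u b * u c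
      = ∑ a, ∑ b, ∑ i, ∑ c, ψ i a * ψ i b * ψ i c * u a * u b * u c :=
        Finset.sum_congr rfl fun a _ => Finset.sum_congr rfl fun b _ => e _
    _ = ∑ a, ∑ i, ∑ b, ∑ c, ψ i a * ψ i b * ψ i c * u a * u b * u c :=
        Finset.sum_congr rfl fun a _ => e _
    _ = ∑ i, ∑ a, ∑ b, ∑ c, ψ i a * ψ i b * ψ i c * u a * u b * u c := e _

lemma key_quad (n B : ℕ) (d : ℕ) (η : ℝ) (hη : 0 ≤ η)
    (ψ : Fin B → Fin n → ℝ) (u : Fin n → ℝ)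
    (hu : ∑ j, u j ^ 2 = 1)
    (hdiag : ∀ i, ∑ j, ψ i j ^ 2 = (d : ℝ))
    (hpos : ∀ i j, 0 ≤ ψ i j)
    (hcross : ∀ i k, i ≠ k → (∑ j, ψ i j * ψ k j) ≤ η * d)
    (S : Finset (Fin B)) :
    ∑ i ∈ S, (∑ a, ψ i a * u a) ^ 2 ≤ (d : ℝ) * (1 + S.card * η) := by
  set s : Fin B → ℝ := fun i => ∑ a, ψ i a * u a with hs
  set Q : ℝ := ∑ i ∈ S, s i ^ 2 with hQ
  have hQ0 : 0 ≤ Q := Finset.sum_nonneg fun i _ => sq_nonneg _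
  have hd0 : (0:ℝ) ≤ (d:ℝ) := Nat.cast_nonneg d
  set v : Fin n → ℝ := fun a => ∑ i ∈ S, s i * ψ i a with hv
  have h1 : Q = ∑ a, v a * u a := by
    simp only [hQ, hv, Finset.sum_mul]
    rw [Finset.sum_comm]
    refine Finset.sum_congr rfl fun i _ => ?_
    rw [pow_two, hs, Finset.mul_sum]
    exact Finset.sum_congr rfl fun a _ => by ring
  have h2 : ∑ a, v a ^ 2 = ∑ i ∈ S, ∑ k ∈ S, s i * s k * ∑ a, ψ i a * ψ k a := by
    simp only [hv, pow_two, Finset.sum_mul_sum]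
    rw [Finset.sum_comm]
    refine Finset.sum_congr rfl fun i _ => ?_
    rw [Finset.sum_comm]
    refine Finset.sum_congr rfl fun k _ => ?_
    rw [Finset.mul_sum]
    exact Finset.sum_congr rfl fun a _ => by ring
  have hGpos : ∀ i k : Fin B, (0:ℝ) ≤ ∑ a, ψ i a * ψ k a := fun i k =>
    Finset.sum_nonneg fun a _ => mul_nonneg (hpos i a) (hpos k a)
  have h3 : ∑ a, v a ^ 2 ≤ (d : ℝ) * Q + η * d * (∑ i ∈ S, |s i|) ^ 2 := by
    rw [h2]
    have hterm : ∀ i ∈ S, ∀ k ∈ S,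
        s i * s k * ∑ a, ψ i a * ψ k a ≤
          η * d * (|s i| * |s k|) + (if i = k then (d:ℝ) * s i ^ 2 else 0) := by
      intro i _ k _
      by_cases hik : i = k
      · subst hik
        rw [if_pos rfl]
        have hd : ∑ a, ψ i a * ψ i a = (d : ℝ) := by
          simpa [pow_two] using hdiag i
        rw [hd]
        have habs : |s i| * |s i| = s i * s i := abs_mul_abs_self _
        have hsq : s i * s i = s i ^ 2 := (pow_two (s i)).symm
        rw [habs, hsq]
        nlinarith [mul_nonneg (mul_nonneg hη hd0) (sq_nonneg (s i))]
      · rw [if_neg hik, add_zero]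
        calc s i * s k * ∑ a, ψ i a * ψ k a
            ≤ |s i| * |s k| * ∑ a, ψ i a * ψ k a := by
              apply mul_le_mul_of_nonneg_right _ (hGpos i k)
              calc s i * s k ≤ |s i * s k| := le_abs_self _
                _ = |s i| * |s k| := abs_mul _ _
          _ ≤ |s i| * |s k| * (η * d) := by
              apply mul_le_mul_of_nonneg_left (hcross i k hik)
                (mul_nonneg (abs_nonneg _) (abs_nonneg _))
          _ = η * d * (|s i| * |s k|) := by ring
    have e1 : ∑ i ∈ S, ∑ k ∈ S, η * ↑d * (|s i| * |s k|)
        = η * d * (∑ i ∈ S, |s i|) ^ 2 := by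
      rw [pow_two, Finset.sum_mul_sum, Finset.mul_sum]
      exact Finset.sum_congr rfl fun i _ => by rw [Finset.mul_sum]
    have e2 : ∑ i ∈ S, ∑ k ∈ S, (if i = k then (d:ℝ) * s i ^ 2 else 0)
        = (d:ℝ) * Q := by
      rw [hQ, Finset.mul_sum]
      refine Finset.sum_congr rfl fun i hi => ?_
      rw [Finset.sum_ite_eq, if_pos hi]
    calc ∑ i ∈ S, ∑ k ∈ S, s i * s k * ∑ a, ψ i a * ψ k a
        ≤ ∑ i ∈ S, ∑ k ∈ S,
            (η * ↑d * (|s i| * |s k|) + (if i = k then (d:ℝ) * s i ^ 2 else 0)) :=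
          Finset.sum_le_sum fun i hi => Finset.sum_le_sum fun k hk => hterm i hi k hk
      _ = (d : ℝ) * Q + η * d * (∑ i ∈ S, |s i|) ^ 2 := by
          simp_rw [Finset.sum_add_distrib]
          rw [e1, e2]; ring
  have h4 : (∑ i ∈ S, |s i|) ^ 2 ≤ (S.card : ℝ) * Q := by
    have := sq_sum_le_card_mul_sum_sq (s := S) (f := fun i => |s i|)
    simpa [sq_abs] using this
  have h5 : ∑ a, v a ^ 2 ≤ (d:ℝ) * Q * (1 + S.card * η) := by
    have h4' : η * d * (∑ i ∈ S, |s i|) ^ 2 ≤ η * d * ((S.card : ℝ) * Q) :=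
      mul_le_mul_of_nonneg_left h4 (mul_nonneg hη hd0)
    nlinarith [h3]
  have h6 : Q ≤ Real.sqrt (∑ a, v a ^ 2) := by
    rw [h1]
    calc ∑ a, v a * u a ≤ Real.sqrt (∑ a, v a ^ 2) * Real.sqrt (∑ a, u a ^ 2) :=
          Real.sum_mul_le_sqrt_mul_sqrt _ _ _
      _ = Real.sqrt (∑ a, v a ^ 2) := by rw [hu, Real.sqrt_one, mul_one]
  have hY0 : 0 ≤ (d:ℝ) * Q * (1 + S.card * η) := by positivity
  have h7 : Q ^ 2 ≤ (d:ℝ) * Q * (1 + S.card * η) := by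
    have := h6.trans (Real.sqrt_le_sqrt h5)
    exact (Real.le_sqrt hQ0 hY0).mp this
  show Q ≤ _
  rcases hQ0.eq_or_lt with h | h
  · rw [← h]; positivity
  · nlinarith [h7, h]

/-- spectral norm of a block-sparse support tensor. -/
theorem stmt_5 :
    ∃ C : ℝ, 0 < C ∧
      ∀ (n B d : ℕ) (η : ℝ), 0 < η → η ≤ 1 → (B : ℝ) ≤ η ^ (-(3 : ℝ) / 2) →
        ∀ ψ : Fin B → Fin n → ℝ,
          (∀ i j, ψ i j = 0 ∨ ψ i j = 1) →
          (∀ i, (Finset.univ.filter fun j => ψ i j ≠ 0).card = d) →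
          (∀ i k, i ≠ k → (∑ j, ψ i j * ψ k j) ≤ η * d) →
          tensorSpecNorm n (fun a b c => ∑ i, ψ i a * ψ i b * ψ i c) ≤
            C * (d : ℝ) ^ ((3 : ℝ) / 2) := by
  refine ⟨6, by norm_num, ?_⟩
  intro n B d η hη hη1 hB ψ h01 hcard hcr
  have hd0 : (0:ℝ) ≤ (d:ℝ) := Nat.cast_nonneg d
  have hpos : ∀ i j, 0 ≤ ψ i j := by
    intro i j; rcases h01 i j with h | h <;> rw [h] <;> norm_num
  have hrpow0 : (0:ℝ) ≤ (d:ℝ) ^ ((3:ℝ)/2) := Real.rpow_nonneg hd0 _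
  by_cases hd : d = 0
  · subst hd
    have hz : ∀ i j, ψ i j = 0 := by
      intro i j
      by_contra h
      have h1 := hcard i
      rw [Finset.card_eq_zero] at h1
      have : j ∈ Finset.univ.filter fun j => ψ i j ≠ 0 := by
        simp [h]
      rw [h1] at this
      exact absurd this (Finset.notMem_empty j)
    refine Real.iSup_le (fun u => ?_) (by positivity)
    simp [hz]
  -- main case
  have hdpos : (0:ℝ) < (d:ℝ) := by
    have := Nat.pos_of_ne_zero hd
    exact_mod_cast this
  have hdiag : ∀ i, ∑ j, ψ i j ^ 2 = (d : ℝ) := by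
    intro i
    have h1 : ∑ j, ψ i j ^ 2
        = ∑ j ∈ Finset.univ.filter (fun j => ψ i j ≠ 0), ψ i j ^ 2 := by
      refine (Finset.sum_filter_of_ne ?_).symm
      intro j _ h
      exact fun hj => h (by rw [hj]; ring)
    have h2 : ∑ j ∈ Finset.univ.filter (fun j => ψ i j ≠ 0), ψ i j ^ 2
        = ∑ _j ∈ Finset.univ.filter (fun j => ψ i j ≠ 0), (1:ℝ) := by
      refine Finset.sum_congr rfl fun j hj => ?_
      rcases h01 i j with h | h
      · exact absurd h (Finset.mem_filter.mp hj).2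
      · rw [h]; norm_num
    rw [h1, h2, Finset.sum_const, hcard i, nsmul_eq_mul, mul_one]
  -- the bound for a fixed unit vector
  have key : ∀ u : EuclideanSpace ℝ (Fin n), ‖u‖ = 1 →
      |∑ a, ∑ b, ∑ c, (∑ i, ψ i a * ψ i b * ψ i c) * u a * u b * u c|
        ≤ 6 * (d : ℝ) ^ ((3:ℝ)/2) := by
    intro u hu
    have hu2 : ∑ j, u j ^ 2 = 1 := by
      have h := EuclideanSpace.norm_eq u
      rw [hu] at h
      have h' : Real.sqrt (∑ i, ‖u i‖ ^ 2) = 1 := h.symm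
      have := Real.sqrt_eq_one.mp h'
      simpa [Real.norm_eq_abs, sq_abs] using this
    set s : Fin B → ℝ := fun i => ∑ a, ψ i a * u a with hs
    have hQfull := key_quad n B d η hη.le ψ u hu2 hdiag hpos hcr
    rw [aux_triple n B ψ u]
    have habs : |∑ i, s i ^ 3| ≤ ∑ i, |s i| ^ 3 := by
      refine (Finset.abs_sum_le_sum_abs _ _).trans ?_
      exact le_of_eq (Finset.sum_congr rfl fun i _ => abs_pow _ _)
    refine habs.trans ?_
    -- split
    set S : Finset (Fin B) := Finset.univ.filter (fun i => 2*η*d < s i ^ 2) with hSdef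
    have hsplit : ∑ i, |s i| ^ 3
        = ∑ i ∈ S, |s i| ^ 3 + ∑ i ∈ Finset.univ.filter (fun i => ¬(2*η*d < s i ^ 2)), |s i| ^ 3 :=
      (Finset.sum_filter_add_sum_filter_not _ _ _).symm
    -- big part
    have hQS := hQfull S
    have hcardS : (S.card : ℝ) * η ≤ 1 := by
      have hlow : (S.card : ℝ) * (2*η*d) ≤ ∑ i ∈ S, s i ^ 2 := by
        have := Finset.sum_le_sum (f := fun _ : Fin B => 2*η*d) (g := fun i => s i ^ 2)
          (s := S) (fun i hi => le_of_lt (Finset.mem_filter.mp hi).2)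
        simpa [Finset.sum_const, nsmul_eq_mul, mul_comm] using this
      have := hlow.trans hQS
      nlinarith [hdpos, hη]
    have hQS2 : ∑ i ∈ S, s i ^ 2 ≤ 2 * d := by
      have : (d:ℝ) * (1 + S.card * η) ≤ (d:ℝ) * 2 := by
        apply mul_le_mul_of_nonneg_left _ hd0
        linarith
      linarith [hQS]
    have hQS0 : (0:ℝ) ≤ ∑ i ∈ S, s i ^ 2 := Finset.sum_nonneg fun i _ => sq_nonneg _
    have hbig : ∑ i ∈ S, |s i| ^ 3 ≤ Real.sqrt (2*d) * (2*d) := by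
      have hterm : ∀ i ∈ S, |s i| ^ 3 ≤ Real.sqrt (2*d) * s i ^ 2 := by
        intro i hi
        have h1 : |s i| ≤ Real.sqrt (2*d) := by
          have : s i ^ 2 ≤ 2*d := by
            calc s i ^ 2 ≤ ∑ k ∈ S, s k ^ 2 :=
                  Finset.single_le_sum (fun k _ => sq_nonneg (s k)) hi
              _ ≤ 2*d := hQS2
          calc |s i| = Real.sqrt (s i ^ 2) := (Real.sqrt_sq_eq_abs _).symm
            _ ≤ Real.sqrt (2*d) := Real.sqrt_le_sqrt this
        calc |s i| ^ 3 = |s i| * |s i| ^ 2 := by ring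
          _ ≤ Real.sqrt (2*d) * |s i| ^ 2 :=
              mul_le_mul_of_nonneg_right h1 (sq_nonneg _)
          _ = Real.sqrt (2*d) * s i ^ 2 := by rw [sq_abs]
      calc ∑ i ∈ S, |s i| ^ 3 ≤ ∑ i ∈ S, Real.sqrt (2*d) * s i ^ 2 :=
            Finset.sum_le_sum hterm
        _ = Real.sqrt (2*d) * ∑ i ∈ S, s i ^ 2 := (Finset.mul_sum _ _ _).symm
        _ ≤ Real.sqrt (2*d) * (2*d) :=
            mul_le_mul_of_nonneg_left hQS2 (Real.sqrt_nonneg _)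
    -- small part
    have hsmall : ∑ i ∈ Finset.univ.filter (fun i => ¬(2*η*d < s i ^ 2)), |s i| ^ 3
        ≤ Real.sqrt (2*η*d) * ((d:ℝ) * (1 + B * η)) := by
      have hterm : ∀ i ∈ Finset.univ.filter (fun i => ¬(2*η*d < s i ^ 2)),
          |s i| ^ 3 ≤ Real.sqrt (2*η*d) * s i ^ 2 := by
        intro i hi
        have h2 : s i ^ 2 ≤ 2*η*d := le_of_not_gt (Finset.mem_filter.mp hi).2
        have h1 : |s i| ≤ Real.sqrt (2*η*d) := by
          calc |s i| = Real.sqrt (s i ^ 2) := (Real.sqrt_sq_eq_abs _).symm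
            _ ≤ Real.sqrt (2*η*d) := Real.sqrt_le_sqrt h2
        calc |s i| ^ 3 = |s i| * |s i| ^ 2 := by ring
          _ ≤ Real.sqrt (2*η*d) * |s i| ^ 2 :=
              mul_le_mul_of_nonneg_right h1 (sq_nonneg _)
          _ = Real.sqrt (2*η*d) * s i ^ 2 := by rw [sq_abs]
      have hsub : ∑ i ∈ Finset.univ.filter (fun i => ¬(2*η*d < s i ^ 2)), s i ^ 2
          ≤ ∑ i, s i ^ 2 :=
        Finset.sum_le_sum_of_subset_of_nonneg (Finset.filter_subset _ _)
          (fun i _ _ => sq_nonneg _)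
      have hfull : ∑ i, s i ^ 2 ≤ (d:ℝ) * (1 + B * η) := by
        have := hQfull Finset.univ
        simpa [Finset.card_univ] using this
      calc ∑ i ∈ Finset.univ.filter (fun i => ¬(2*η*d < s i ^ 2)), |s i| ^ 3
          ≤ ∑ i ∈ Finset.univ.filter (fun i => ¬(2*η*d < s i ^ 2)), Real.sqrt (2*η*d) * s i ^ 2 :=
            Finset.sum_le_sum hterm
        _ = Real.sqrt (2*η*d) * ∑ i ∈ Finset.univ.filter (fun i => ¬(2*η*d < s i ^ 2)), s i ^ 2 :=
            (Finset.mul_sum _ _ _).symm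
        _ ≤ Real.sqrt (2*η*d) * ((d:ℝ) * (1 + B * η)) := by
            apply mul_le_mul_of_nonneg_left (hsub.trans hfull) (Real.sqrt_nonneg _)
    -- numeric estimates
    have hpow : (d:ℝ) ^ ((3:ℝ)/2) = (d:ℝ) * Real.sqrt d := by
      rw [show (3:ℝ)/2 = (1/2 : ℝ) * 3 by norm_num, Real.rpow_mul hd0,
        ← Real.sqrt_eq_rpow, show ((3:ℝ) = ((3:ℕ):ℝ)) by norm_num, Real.rpow_natCast]
      calc (Real.sqrt d) ^ 3 = (Real.sqrt d * Real.sqrt d) * Real.sqrt d := by ring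
        _ = (d:ℝ) * Real.sqrt d := by rw [Real.mul_self_sqrt hd0]
    have hsqrt2 : Real.sqrt 2 ≤ 1.5 := by
      nlinarith [Real.sq_sqrt (by norm_num : (0:ℝ) ≤ 2), Real.sqrt_nonneg 2]
    have hbig2 : Real.sqrt (2*d) * (2*d) ≤ 3 * ((d:ℝ) * Real.sqrt d) := by
      rw [Real.sqrt_mul (by norm_num : (0:ℝ) ≤ 2)]
      nlinarith [Real.sqrt_nonneg (d:ℝ), Real.sqrt_nonneg (2:ℝ), hdpos,
        mul_nonneg (Real.sqrt_nonneg (2:ℝ)) (Real.sqrt_nonneg (d:ℝ))]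
    -- Bη ≤ η^{-1/2} and √η (1+Bη) ≤ 2
    have hBη : Real.sqrt η * ((B:ℝ) * η) ≤ 1 := by
      have h1 : (B:ℝ) * η ≤ η ^ (-(3:ℝ)/2) * η :=
        mul_le_mul_of_nonneg_right hB hη.le
      have h2 : Real.sqrt η * ((B:ℝ) * η) ≤ Real.sqrt η * (η ^ (-(3:ℝ)/2) * η) :=
        mul_le_mul_of_nonneg_left h1 (Real.sqrt_nonneg _)
      refine h2.trans (le_of_eq ?_)
      have e : Real.sqrt η * (η ^ (-(3:ℝ)/2) * η)
          = η ^ ((1:ℝ)/2) * (η ^ (-(3:ℝ)/2) * η ^ (1:ℝ)) := by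
        rw [Real.sqrt_eq_rpow, Real.rpow_one]
      rw [e, ← Real.rpow_add hη, ← Real.rpow_add hη]
      norm_num
    have hsqη1 : Real.sqrt η ≤ 1 := by
      rw [show (1:ℝ) = Real.sqrt 1 by rw [Real.sqrt_one]]
      exact Real.sqrt_le_sqrt hη1
    have hsmall2 : Real.sqrt (2*η*d) * ((d:ℝ) * (1 + B * η))
        ≤ 3 * ((d:ℝ) * Real.sqrt d) := by
      have hsq : Real.sqrt (2*η*d) = Real.sqrt 2 * Real.sqrt η * Real.sqrt d := by
        rw [Real.sqrt_mul (by positivity), Real.sqrt_mul (by norm_num : (0:ℝ) ≤ 2)]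
      rw [hsq]
      have hη2 : Real.sqrt η * (1 + (B:ℝ) * η) ≤ 2 := by
        have : Real.sqrt η * (1 + (B:ℝ) * η)
            = Real.sqrt η + Real.sqrt η * ((B:ℝ) * η) := by ring
        rw [this]
        linarith [hBη, hsqη1]
      have hBη0 : (0:ℝ) ≤ 1 + (B:ℝ) * η := by positivity
      calc Real.sqrt 2 * Real.sqrt η * Real.sqrt d * ((d:ℝ) * (1 + B * η))
          = (Real.sqrt 2 * ((d:ℝ) * Real.sqrt d)) * (Real.sqrt η * (1 + (B:ℝ) * η)) := by
            ring
        _ ≤ (Real.sqrt 2 * ((d:ℝ) * Real.sqrt d)) * 2 := by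
            apply mul_le_mul_of_nonneg_left hη2 (by positivity)
        _ ≤ 3 * ((d:ℝ) * Real.sqrt d) := by
            nlinarith [hsqrt2, mul_nonneg hd0 (Real.sqrt_nonneg (d:ℝ))]
    rw [hsplit, hpow]
    calc ∑ i ∈ S, |s i| ^ 3
          + ∑ i ∈ Finset.univ.filter (fun i => ¬(2*η*d < s i ^ 2)), |s i| ^ 3
        ≤ Real.sqrt (2*d) * (2*d) + Real.sqrt (2*η*d) * ((d:ℝ) * (1 + B * η)) :=
          add_le_add hbig hsmall
      _ ≤ 3 * ((d:ℝ) * Real.sqrt d) + 3 * ((d:ℝ) * Real.sqrt d) :=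
          add_le_add hbig2 hsmall2
      _ = 6 * ((d:ℝ) * Real.sqrt d) := by ring
  refine Real.iSup_le (fun u => ?_) (by positivity)
  exact key u.1 u.2
end

section
/- Hard thresholding support containment: let $S^*, L^*, L \in \mathbb{R}^{n\times n\times n}$ and $\zeta > 0$ with $\|L - L^*\|_\infty \le \zeta$. Define $S = HT_\zeta(S^* + L^* - L)$, where $HT_\zeta(A)_{ijk} = A_{ijk}$ if $|A_{ijk}| > \zeta$ and $0$ otherwise. Then $\mathrm{supp}(S - S^*) \subseteq \mathrm{supp}(S^*)$, i.e., $(S - S^*)_{ijk} \ne 0$ implies $S^*_{ijk} \ne 0$. -/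
/-- hard thresholding preserves the support of the sparse component. -/
theorem stmt_17 (n : ℕ) (Sstar Lstar L : Fin n → Fin n → Fin n → ℝ)
    (ζ : ℝ) (hζ : 0 < ζ) (hclose : ∀ i j k, |L i j k - Lstar i j k| ≤ ζ)
    (S : Fin n → Fin n → Fin n → ℝ)
    (hS : ∀ i j k, S i j k =
      if ζ < |Sstar i j k + Lstar i j k - L i j k|
      then Sstar i j k + Lstar i j k - L i j k else 0) :
    ∀ i j k, S i j k - Sstar i j k ≠ 0 → Sstar i j k ≠ 0 := by
  intro i j k h
  by_contra h0
  apply h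
  rw [hS, h0, if_neg, zero_sub, neg_zero]
  rw [not_lt, zero_add]
  have := hclose i j k
  rwa [abs_sub_comm] at this
end
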